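/- arXiv:2303.01552 — 5 statements merged into one kernel-verified Lean document; each statement's English description precedes it below -/
import Mathlib

section
/- Assume all test statistics (investigated and negative controls) are mutually independent and each true-null statistic has the same distribution, with continuous CDF, as each negative control statistic. Then for every fixed t, the estimator FDRhat(t) = n·((V_nc(t)+2)/(m+1)) / (R(t) ∨ 1) satisfies E[FDRhat(t)] ≥ FDR(t) = E[V(t)/(R(t) ∨ 1)]. -/
open MeasureTheory ProbabilityTheory
open scoped ENNReal

/-- The (right-continuous) CDF of a real random variable `X` under `μ`. -/
noncomputable def cdf' {Ω : Type*} [MeasurableSpace Ω] (μ : Measure Ω) (X : Ω → ℝ) (t : ℝ) : ℝ :=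
  (μ {ω | X ω ≤ t}).toReal

/-- The random variable `X` has a continuous CDF under `μ`. -/
def ContinuousCDF {Ω : Type*} [MeasurableSpace Ω] (μ : Measure Ω) (X : Ω → ℝ) : Prop :=
  Continuous (cdf' μ X)

/-- `V(t)`: number of true-null investigated statistics at most `t`. -/
noncomputable def Vcount {Ω : Type*} (n m : ℕ) (T : Fin (n + m) → Ω → ℝ)
    (I₀ : Set (Fin n)) (ω : Ω) (t : ℝ) : ℕ :=
  ({i : Fin n | i ∈ I₀ ∧ T (Fin.castAdd m i) ω ≤ t} : Set (Fin n)).ncard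

/-- `R(t)`: number of investigated statistics at most `t`. -/
noncomputable def Rcount {Ω : Type*} (n m : ℕ) (T : Fin (n + m) → Ω → ℝ)
    (ω : Ω) (t : ℝ) : ℕ :=
  ({i : Fin n | T (Fin.castAdd m i) ω ≤ t} : Set (Fin n)).ncard

/-- `V_nc(t)`: number of negative control statistics at most `t`. -/
noncomputable def VncCount {Ω : Type*} (n m : ℕ) (T : Fin (n + m) → Ω → ℝ)
    (ω : Ω) (t : ℝ) : ℕ :=
  ({j : Fin m | T (Fin.natAdd n j) ω ≤ t} : Set (Fin m)).ncard

/-!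
Push everything forward to the joint law of the statistics, which by independence is the
product of the marginals. For a true null `i` and a negative control `j`, the transposition of
the coordinates `i` and `j` preserves this law, because the two marginals agree. Write
`F_i = 1{x_i ≤ t} / (R ∨ 1)`. Removing coordinate `i` leaves `r = R - 1{x_i ≤ t}` rejections,
whichever value sits in slot `i`, so `F_i` and its `m` transposed copies all have the
denominator `r + 1`, and they add up to at most `(1 + V_nc)/(r + 1) ≤ (V_nc + 2)/(R ∨ 1)`.
Taking expectations gives `(m + 1) E[F_i] ≤ E[(V_nc + 2)/(R ∨ 1)]`, and summing over the at
most `n` true nulls gives the bound.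
-/

theorem MeasureTheory.integral_le_of_add_sum_comp_le {α J : Type*} [MeasurableSpace α]
    {ν : Measure α} [Fintype J] {σ : J → α → α} (hσ : ∀ j, MeasurePreserving (σ j) ν ν)
    {f g : α → ℝ} (hf : Integrable f ν) (hg : Integrable g ν)
    (hfg : ∀ x, f x + ∑ j, f (σ j x) ≤ g x) :
    (Fintype.card J + 1) * ∫ x, f x ∂ν ≤ ∫ x, g x ∂ν := by
  have hfσ : ∀ j, Integrable (fun x ↦ f (σ j x)) ν := fun j ↦
    (hσ j).integrable_comp_of_integrable hf
  have hint : ∀ j, ∫ x, f (σ j x) ∂ν = ∫ x, f x ∂ν := fun j ↦ by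
    rw [← integral_map (hσ j).aemeasurable (by rw [(hσ j).map_eq]; exact hf.1), (hσ j).map_eq]
  calc (Fintype.card J + 1) * ∫ x, f x ∂ν = ∫ x, (f x + ∑ j, f (σ j x)) ∂ν := by
        rw [integral_add hf (integrable_finsetSum _ fun j _ ↦ hfσ j),
          integral_finsetSum _ fun j _ ↦ hfσ j, Finset.sum_congr rfl fun j _ ↦ hint j]
        simp only [Finset.sum_const, Finset.card_univ, nsmul_eq_mul]
        ring
    _ ≤ ∫ x, g x ∂ν := integral_mono (hf.add (integrable_finsetSum _ fun j _ ↦ hfσ j)) hg hfg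

theorem MeasureTheory.measurePreserving_comp_swap_pi {ι β : Type*} [Fintype ι] [DecidableEq ι]
    [MeasurableSpace β] (μ : ι → Measure β) [∀ i, SigmaFinite (μ i)] {a b : ι}
    (hab : μ a = μ b) :
    MeasurePreserving (fun x : ι → β ↦ x ∘ Equiv.swap a b) (Measure.pi μ) (Measure.pi μ) := by
  have hμ : ∀ i, μ i = μ (Equiv.swap a b i) := fun i ↦ by
    rcases eq_or_ne i a with rfl | hia
    · rw [Equiv.swap_apply_left, hab]
    rcases eq_or_ne i b with rfl | hib
    · rw [Equiv.swap_apply_right, hab]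
    · rw [Equiv.swap_apply_of_ne_of_ne hia hib]
  convert measurePreserving_arrowCongr' μ μ (Equiv.swap a b) (MeasurableEquiv.refl β)
    fun i ↦ hμ i ▸ MeasurePreserving.id (μ i) using 1
  ext x i
  simp [MeasurableEquiv.arrowCongr', Equiv.arrowCongr']

namespace NegativeControl

variable {n m : ℕ} (t : ℝ)

/-! `R`, `V_nc`, the summands `1{x_a ≤ t} / (R ∨ 1)` of `V / (R ∨ 1)`, and
`(V_nc + 2) / (R ∨ 1)`, as functions of the vector `x` of all `n + m` statistics. -/

noncomputable def rejections (x : Fin (n + m) → ℝ) : ℝ :=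
  ∑ i : Fin n, (Set.Iic t).indicator 1 (x (Fin.castAdd m i))

noncomputable def controlRejections (x : Fin (n + m) → ℝ) : ℝ :=
  ∑ j : Fin m, (Set.Iic t).indicator 1 (x (Fin.natAdd n j))

noncomputable def fdpTerm (a : Fin (n + m)) (x : Fin (n + m) → ℝ) : ℝ :=
  (Set.Iic t).indicator 1 (x a) / max (rejections t x) 1

noncomputable def controlRatio (x : Fin (n + m) → ℝ) : ℝ :=
  (controlRejections t x + 2) / max (rejections t x) 1

lemma indicator_Iic_nonneg (c : ℝ) : 0 ≤ (Set.Iic t).indicator (1 : ℝ → ℝ) c :=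
  Set.indicator_nonneg (fun _ _ ↦ zero_le_one) c

lemma indicator_Iic_le_one (c : ℝ) : (Set.Iic t).indicator (1 : ℝ → ℝ) c ≤ 1 :=
  Set.indicator_le_self' (fun _ _ ↦ zero_le_one) c

lemma controlRejections_nonneg (x : Fin (n + m) → ℝ) : 0 ≤ controlRejections t x :=
  Finset.sum_nonneg fun _ _ ↦ indicator_Iic_nonneg t _

lemma indicator_div_max_add {s : Set ℝ} {r : ℝ} (hr : 0 ≤ r) (c : ℝ) :
    s.indicator 1 c / max (s.indicator 1 c + r) 1 = s.indicator 1 c / (r + 1) := by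
  by_cases hc : c ∈ s
  · rw [Set.indicator_of_mem hc, Pi.one_apply, max_eq_left (by linarith), add_comm]
  · simp [hc]

lemma indicator_le_rejections (x : Fin (n + m) → ℝ) (i : Fin n) :
    (Set.Iic t).indicator 1 (x (Fin.castAdd m i)) ≤ rejections t x :=
  Finset.single_le_sum (f := fun i ↦ (Set.Iic t).indicator 1 (x (Fin.castAdd m i)))
    (fun _ _ ↦ indicator_Iic_nonneg t _) (Finset.mem_univ i)

lemma rejections_comp_swap (x : Fin (n + m) → ℝ) (i : Fin n) (j : Fin m) :
    rejections t (x ∘ Equiv.swap (Fin.castAdd m i) (Fin.natAdd n j)) =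
      rejections t x - (Set.Iic t).indicator 1 (x (Fin.castAdd m i))
        + (Set.Iic t).indicator 1 (x (Fin.natAdd n j)) := by
  have hrest : ∀ i' ∈ Finset.univ.erase i,
      (x ∘ Equiv.swap (Fin.castAdd m i) (Fin.natAdd n j)) (Fin.castAdd m i') =
        x (Fin.castAdd m i') := fun i' hi' ↦ by
    have hne : i' ≠ i := Finset.ne_of_mem_erase hi'
    rw [Fin.ne_iff_vne] at hne
    refine congrArg x (Equiv.swap_apply_of_ne_of_ne ?_ ?_) <;>
      simp only [ne_eq, Fin.ext_iff, Fin.val_castAdd, Fin.val_natAdd] <;> omega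
  rw [rejections, rejections, ← Finset.add_sum_erase _ _ (Finset.mem_univ i),
    ← Finset.add_sum_erase _ _ (Finset.mem_univ i),
    Finset.sum_congr rfl fun i' hi' ↦ congrArg _ (hrest i' hi')]
  simp only [Function.comp_apply, Equiv.swap_apply_left]
  ring

lemma fdpTerm_add_sum_swap_le (x : Fin (n + m) → ℝ) (i : Fin n) :
    fdpTerm t (Fin.castAdd m i) x +
        ∑ j : Fin m, fdpTerm t (Fin.castAdd m i) (x ∘ Equiv.swap (Fin.castAdd m i) (Fin.natAdd n j))
      ≤ controlRatio t x := by
  set a := Fin.castAdd m i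
  set e : ℝ → ℝ := (Set.Iic t).indicator 1
  set r := rejections t x - e (x a)
  have hr : 0 ≤ r := sub_nonneg.2 (indicator_le_rejections t x i)
  have hx : fdpTerm t a x = e (x a) / (r + 1) := by
    rw [fdpTerm, show rejections t x = e (x a) + r by ring, indicator_div_max_add hr]
  have hswap : ∀ j : Fin m, fdpTerm t a (x ∘ Equiv.swap a (Fin.natAdd n j)) =
      e (x (Fin.natAdd n j)) / (r + 1) := fun j ↦ by
    rw [fdpTerm, rejections_comp_swap, Function.comp_apply, Equiv.swap_apply_left,
      show rejections t x - e (x a) + e (x (Fin.natAdd n j)) = e (x (Fin.natAdd n j)) + r by ring,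
      indicator_div_max_add hr]
  rw [hx, Finset.sum_congr rfl fun j _ ↦ hswap j, ← Finset.sum_div, ← add_div, controlRatio]
  have he : e (x a) ≤ 1 := indicator_Iic_le_one t _
  have hN := controlRejections_nonneg t x
  exact div_le_div₀ (by positivity) (by rw [controlRejections]; linarith) (by positivity)
    (max_le (by linarith) (by linarith))

@[fun_prop]
lemma measurable_rejections : Measurable (rejections (n := n) (m := m) t) := by
  unfold rejections; fun_prop (disch := measurability)

lemma measurable_fdpTerm (a : Fin (n + m)) : Measurable (fdpTerm t a) := by
  unfold fdpTerm; fun_prop (disch := measurability)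

lemma measurable_controlRatio : Measurable (controlRatio (n := n) (m := m) t) := by
  unfold controlRatio controlRejections; fun_prop (disch := measurability)

lemma controlRejections_le (x : Fin (n + m) → ℝ) : controlRejections t x ≤ m := by
  simpa [controlRejections] using
    Finset.sum_le_sum fun j (_ : j ∈ Finset.univ) ↦ indicator_Iic_le_one t (x (Fin.natAdd n j))

lemma controlRatio_nonneg (x : Fin (n + m) → ℝ) : 0 ≤ controlRatio t x := by
  have hN := controlRejections_nonneg t x
  exact div_nonneg (by linarith) (by positivity)

lemma integrable_fdpTerm (ν : Measure (Fin (n + m) → ℝ)) [IsFiniteMeasure ν] (a : Fin (n + m)) :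
    Integrable (fdpTerm t a) ν := by
  refine .of_bound (measurable_fdpTerm t a).aestronglyMeasurable 1 (ae_of_all _ fun x ↦ ?_)
  rw [fdpTerm, Real.norm_of_nonneg (div_nonneg (indicator_Iic_nonneg t _) (by positivity))]
  exact div_le_one_of_le₀ ((indicator_Iic_le_one t _).trans (le_max_right _ _)) (by positivity)

lemma integrable_controlRatio (ν : Measure (Fin (n + m) → ℝ)) [IsFiniteMeasure ν] :
    Integrable (controlRatio t) ν := by
  refine .of_bound (measurable_controlRatio t).aestronglyMeasurable (m + 2) (ae_of_all _ fun x ↦ ?_)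
  rw [Real.norm_of_nonneg (controlRatio_nonneg t x), controlRatio]
  exact (div_le_self (by linarith [controlRejections_nonneg t x]) (le_max_right _ _)).trans
    (by linarith [controlRejections_le t x])

end NegativeControl

open NegativeControl

section Counts

variable {Ω : Type*} (n m : ℕ) (T : Fin (n + m) → Ω → ℝ) (ω : Ω) (t : ℝ)

lemma Rcount_cast : (Rcount n m T ω t : ℝ) = rejections t (fun k ↦ T k ω) := by
  rw [Rcount, Set.ncard_eq_toFinset_card', Set.toFinset_ofPred, Finset.natCast_card_filter]
  simp only [rejections, Set.indicator_apply, Set.mem_Iic, Pi.one_apply]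

lemma VncCount_cast : (VncCount n m T ω t : ℝ) = controlRejections t (fun k ↦ T k ω) := by
  rw [VncCount, Set.ncard_eq_toFinset_card', Set.toFinset_ofPred, Finset.natCast_card_filter]
  simp only [controlRejections, Set.indicator_apply, Set.mem_Iic, Pi.one_apply]

lemma Vcount_cast_div_eq_sum_fdpTerm (I₀ : Set (Fin n)) [DecidablePred (· ∈ I₀)] :
    (Vcount n m T I₀ ω t : ℝ) / (max (Rcount n m T ω t) 1 : ℕ) =
      ∑ i ∈ Finset.univ.filter (· ∈ I₀), fdpTerm t (Fin.castAdd m i) (fun k ↦ T k ω) := by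
  rw [Vcount, Set.ncard_eq_toFinset_card', Set.toFinset_ofPred, Finset.natCast_card_filter,
    Nat.cast_max, Nat.cast_one, Rcount_cast, Finset.sum_div, Finset.sum_filter]
  simp only [fdpTerm, Set.indicator_apply, Set.mem_Iic, Pi.one_apply, ite_and, ite_div, zero_div]

lemma fdrHat_eq_mul_controlRatio :
    (n : ℝ) * (((VncCount n m T ω t : ℝ) + 2) / ((m : ℝ) + 1)) / (max (Rcount n m T ω t) 1 : ℕ) =
      n / (m + 1) * controlRatio t (fun k ↦ T k ω) := by
  rw [Nat.cast_max, Nat.cast_one, Rcount_cast, VncCount_cast, controlRatio]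
  ring

end Counts

theorem stmt7_general {Ω : Type*} [MeasurableSpace Ω] (μ : Measure Ω) [IsProbabilityMeasure μ]
    (n m : ℕ) (T : Fin (n + m) → Ω → ℝ) (hmeas : ∀ k, Measurable (T k))
    (I₀ : Set (Fin n))
    (hindep : iIndepFun T μ)
    (hident : ∀ i ∈ I₀, ∀ j : Fin m,
      Measure.map (T (Fin.castAdd m i)) μ = Measure.map (T (Fin.natAdd n j)) μ)
    (t : ℝ) :
    (∫ ω, ((Vcount n m T I₀ ω t : ℝ) / (max (Rcount n m T ω t) 1 : ℕ)) ∂μ) ≤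
      ∫ ω, ((n : ℝ) * (((VncCount n m T ω t : ℝ) + 2) / ((m : ℝ) + 1)) /
        (max (Rcount n m T ω t) 1 : ℕ)) ∂μ := by
  classical
  set X : Ω → Fin (n + m) → ℝ := fun ω k ↦ T k ω
  have hX : AEMeasurable X μ := (measurable_pi_lambda _ hmeas).aemeasurable
  set ν := μ.map X
  have hchange : ∀ f : (Fin (n + m) → ℝ) → ℝ, Measurable f → ∫ x, f x ∂ν = ∫ ω, f (X ω) ∂μ :=
    fun f hf ↦ integral_map hX hf.aestronglyMeasurable
  have hlaw : ν = Measure.pi fun k ↦ μ.map (T k) :=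
    hindep.map_fun_eq_pi_map fun k ↦ (hmeas k).aemeasurable
  have hnull : ∀ i ∈ I₀, ∫ x, fdpTerm t (Fin.castAdd m i) x ∂ν ≤
      (∫ x, controlRatio t x ∂ν) / (m + 1) := fun i hi ↦ by
    have := integral_le_of_add_sum_comp_le
      (fun j ↦ hlaw ▸ measurePreserving_comp_swap_pi _ (hident i hi j))
      (integrable_fdpTerm t ν _) (integrable_controlRatio t ν) (fdpTerm_add_sum_swap_le t · i)
    rw [Fintype.card_fin] at this
    rw [le_div_iff₀ (by positivity)]
    linarith
  have hG : 0 ≤ ∫ x, controlRatio t x ∂ν := integral_nonneg (controlRatio_nonneg t)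
  calc ∫ ω, (Vcount n m T I₀ ω t : ℝ) / (max (Rcount n m T ω t) 1 : ℕ) ∂μ
      = ∑ i ∈ Finset.univ.filter (· ∈ I₀), ∫ x, fdpTerm t (Fin.castAdd m i) x ∂ν := by
        rw [← integral_finsetSum _ fun i _ ↦ integrable_fdpTerm t ν _,
          hchange _ (Finset.measurable_sum _ fun i _ ↦ measurable_fdpTerm t _)]
        simp_rw [Vcount_cast_div_eq_sum_fdpTerm]
        rfl
    _ ≤ ∑ i ∈ Finset.univ.filter (· ∈ I₀), (∫ x, controlRatio t x ∂ν) / (m + 1) :=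
        Finset.sum_le_sum fun i hi ↦ hnull i (Finset.mem_filter.1 hi).2
    _ ≤ n * ((∫ x, controlRatio t x ∂ν) / (m + 1)) := by
        rw [Finset.sum_const, nsmul_eq_mul]
        gcongr
        exact_mod_cast (Finset.card_filter_le _ _).trans (Finset.card_fin n).le
    _ = _ := by
        simp_rw [fdrHat_eq_mul_controlRatio]
        rw [integral_const_mul, hchange _ (measurable_controlRatio t)]
        ring

/-- if all statistics are mutually independent and every true-null statistic
has the same (continuous) distribution as every negative control, then for every fixed
threshold `t` the estimator `FDRhat(t) = n((V_nc(t)+2)/(m+1))/(R(t) ∨ 1)` satisfies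
`E[FDRhat(t)] ≥ FDR(t) = E[V(t)/(R(t) ∨ 1)]`. -/
theorem stmt7 {Ω : Type*} [MeasurableSpace Ω] (μ : Measure Ω) [IsProbabilityMeasure μ]
    (n m : ℕ) (T : Fin (n + m) → Ω → ℝ) (hmeas : ∀ k, Measurable (T k))
    (I₀ : Set (Fin n))
    (hindep : iIndepFun T μ)
    (hident : ∀ i ∈ I₀, ∀ j : Fin m,
      Measure.map (T (Fin.castAdd m i)) μ = Measure.map (T (Fin.natAdd n j)) μ)
    (hcont : ∀ i ∈ I₀, ContinuousCDF μ (T (Fin.castAdd m i)))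
    (hcontnc : ∀ j : Fin m, ContinuousCDF μ (T (Fin.natAdd n j)))
    (t : ℝ) :
    (∫ ω, ((Vcount n m T I₀ ω t : ℝ) / (max (Rcount n m T ω t) 1 : ℕ)) ∂μ) ≤
      ∫ ω, ((n : ℝ) * (((VncCount n m T ω t : ℝ) + 2) / ((m : ℝ) + 1)) /
        (max (Rcount n m T ω t) 1 : ℕ)) ∂μ :=
  stmt7_general μ n m T hmeas I₀ hindep hident t
end

section
/- Let T denote the vector of all n + m test statistics (without ties) and let f be a real-valued function of T such that (1) f(T) = f(g(T)) for every strictly increasing function g : R → R applied componentwise, and (2) f(T) = f(T_P) for every permutation P of the coordinates that does not exchange investigated statistics (indices 1,...,n) with negative control statistics (indices n+1,...,n+m). Then f(T) is a function of the multiset of RANC p-values {p_i : 1 ≤ i ≤ n}. -/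
/-- The RANC p-value of investigated hypothesis `i` for a (deterministic) vector of
statistics `x` (investigated: indices `Fin.castAdd m i`, negative controls:
`Fin.natAdd n j`): `p_i = (1 + #{negative controls j : x_j ≤ x_i}) / (1 + m)`. -/
noncomputable def rancVec (n m : ℕ) (x : Fin (n + m) → ℝ) (i : Fin n) : ℝ :=
  ((1 : ℝ) +
      ({j : Fin m | x (Fin.natAdd n j) ≤ x (Fin.castAdd m i)} : Set (Fin m)).ncard) /
    (1 + (m : ℝ))

/-!
Sorting the investigated statistics and the negative controls separately is a permutation that
does not mix the two groups. After sorting, the counts `#{controls ≤ T_i}` are nondecreasing in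
`i`, hence determined by their multiset, i.e. by the multiset of RANC p-values. For sorted tie-free
vectors these counts determine the whole relative order of the `n + m` statistics, so two vectors
with the same p-values differ by a strictly increasing map after sorting, and `f` sees neither.
-/

open Finset Equiv

theorem StrictMonoOn.exists_strictMono_extension_of_finite {s : Set ℝ} {φ : ℝ → ℝ}
    (hφ : StrictMonoOn φ s) (hs : s.Finite) :
    ∃ g : ℝ → ℝ, StrictMono g ∧ Set.EqOn φ g s := by
  classical
  -- for `ε` below all slopes of `φ`, `φ - ε • id` is monotone on `s`, and adding `ε • id` back
  -- to a monotone extension of it gives a strictly monotone one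
  obtain ⟨ε, hε, hslope⟩ : ∃ ε > 0, ∀ a ∈ s, ∀ b ∈ s, a < b → ε * (b - a) ≤ φ b - φ a := by
    set slopes : Finset ℝ := insert 1 (((hs.toFinset ×ˢ hs.toFinset).filter
      (fun p => p.1 < p.2)).image (fun p => (φ p.2 - φ p.1) / (p.2 - p.1)))
    refine ⟨slopes.min' (insert_nonempty _ _), ?_, fun a ha b hb hab => ?_⟩
    · simp only [lt_min'_iff, slopes, mem_insert, mem_image, mem_filter, mem_product,
        Set.Finite.mem_toFinset]
      rintro y (rfl | ⟨⟨a, b⟩, ⟨⟨ha, hb⟩, hab⟩, rfl⟩)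
      · exact one_pos
      · exact div_pos (sub_pos.2 (hφ ha hb hab)) (sub_pos.2 hab)
    · rw [← le_div_iff₀ (sub_pos.2 hab)]
      exact min'_le _ _ (mem_insert_of_mem (mem_image.2 ⟨(a, b), by simp [*], rfl⟩))
  have hmono : MonotoneOn (fun t => φ t - ε * t) s := fun a ha b hb hab => by
    rcases hab.eq_or_lt with rfl | hlt
    · rfl
    · linarith [hslope a ha b hb hlt]
  obtain ⟨h, hh, heq⟩ := hmono.exists_monotone_extension
    (hs.image _).bddBelow (hs.image _).bddAbove
  refine ⟨fun t => h t + ε * t, hh.add_strictMono (strictMono_id.const_mul hε), ?_⟩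
  intro a ha
  simp [← heq ha]

theorem exists_strictMono_comp_eq_of_le_iff_le {ι : Type*} [Finite ι] {u v : ι → ℝ}
    (h : ∀ k l, u k ≤ u l ↔ v k ≤ v l) : ∃ g : ℝ → ℝ, StrictMono g ∧ g ∘ u = v := by
  have hv : ∀ k l, u k = u l → v k = v l := fun k l hkl =>
    le_antisymm ((h k l).1 hkl.le) ((h l k).1 hkl.ge)
  have hφ : ∀ k, Function.extend u v id (u k) = v k := fun k => by
    classical
    rw [Function.extend_def, dif_pos ⟨k, rfl⟩]
    exact hv _ _ (Classical.choose_spec (p := fun l => u l = u k) _)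
  have hmono : StrictMonoOn (Function.extend u v id) (Set.range u) := by
    rintro _ ⟨k, rfl⟩ _ ⟨l, rfl⟩ hkl
    rw [hφ, hφ]
    exact lt_of_not_ge fun hlk => hkl.not_ge ((h l k).2 hlk)
  obtain ⟨g, hg, hgφ⟩ := hmono.exists_strictMono_extension_of_finite (Set.finite_range u)
  exact ⟨g, hg, funext fun k => (hgφ ⟨k, rfl⟩).symm.trans (hφ k)⟩

theorem card_filter_comp_perm {α : Type*} [Fintype α] (τ : Perm α) (P : α → Prop)
    [DecidablePred P] : #{j | P (τ j)} = #{j | P j} := by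
  simp only [card_filter]
  exact Equiv.sum_comp τ fun j => if P j then 1 else 0

theorem Monotone.lt_card_filter_le_iff {α : Type*} [LinearOrder α] {m : ℕ} {w : Fin m → α}
    (hw : Monotone w) (t : α) (j : Fin m) : (j : ℕ) < #{j' | w j' ≤ t} ↔ w j ≤ t := by
  constructor
  · intro hj
    by_contra! htj
    have hsub : ({j' | w j' ≤ t} : Finset (Fin m)) ⊆ Iio j := fun j' hj' => by
      simp only [mem_filter, mem_univ, true_and] at hj'
      exact mem_Iio.2 (hw.reflect_lt (hj'.trans_lt htj))
    exact (card_le_card hsub).not_gt (by simpa using hj)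
  · intro hjt
    have hsub : Iic j ⊆ ({j' | w j' ≤ t} : Finset (Fin m)) := fun j' hj' => by
      simp only [mem_filter, mem_univ, true_and]
      exact (hw (mem_Iic.1 hj')).trans hjt
    simpa using (card_le_card hsub)

theorem eq_of_monotone_of_map_univ_eq {α : Type*} [LinearOrder α] {n : ℕ} {c d : Fin n → α}
    (hc : Monotone c) (hd : Monotone d)
    (h : Multiset.map c (univ : Finset (Fin n)).val = Multiset.map d univ.val) : c = d := by
  rw [Fin.univ_val_map, Fin.univ_val_map, Multiset.coe_eq_coe] at h
  exact List.ofFn_inj.1 (h.eq_of_sortedLE (List.sortedLE_ofFn_iff.2 hc)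
    (List.sortedLE_ofFn_iff.2 hd))

namespace Fin

variable {n m : ℕ} (σ : Perm (Fin n)) (τ : Perm (Fin m))

def blockPerm : Perm (Fin (n + m)) :=
  finSumFinEquiv.permCongr (σ.sumCongr τ)

@[simp]
theorem blockPerm_castAdd (i : Fin n) : blockPerm σ τ (castAdd m i) = castAdd m (σ i) := by
  simp [blockPerm]

@[simp]
theorem blockPerm_natAdd (j : Fin m) : blockPerm σ τ (natAdd n j) = natAdd n (τ j) := by
  simp [blockPerm]

theorem lt_iff_blockPerm_lt (k : Fin (n + m)) : (k : ℕ) < n ↔ (blockPerm σ τ k : ℕ) < n := by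
  induction k using addCases <;> simp

end Fin

open Fin (blockPerm)

namespace Ranc

variable {n m : ℕ}

noncomputable def count (x : Fin (n + m) → ℝ) (i : Fin n) : ℕ :=
  #{j : Fin m | x (Fin.natAdd n j) ≤ x (Fin.castAdd m i)}

theorem rancVec_eq (x : Fin (n + m) → ℝ) (i : Fin n) :
    rancVec n m x i = (1 + count x i) / (1 + m) := by
  rw [rancVec, count, Set.ncard_eq_toFinset_card', Set.toFinset_ofPred]

theorem map_count_eq_of_map_rancVec_eq {x y : Fin (n + m) → ℝ}
    (h : Multiset.map (rancVec n m x) (univ : Finset (Fin n)).val =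
      Multiset.map (rancVec n m y) univ.val) :
    Multiset.map (count x) (univ : Finset (Fin n)).val = Multiset.map (count y) univ.val := by
  have hinj : Function.Injective fun c : ℕ => (1 + (c : ℝ)) / (1 + m) := fun c d hcd => by
    have hm : (1 + m : ℝ) ≠ 0 := by positivity
    simpa [div_left_inj' hm] using hcd
  apply Multiset.map_injective hinj
  simpa only [Multiset.map_map, Function.comp_def, ← rancVec_eq] using h

theorem count_comp_blockPerm (x : Fin (n + m) → ℝ) (σ : Perm (Fin n)) (τ : Perm (Fin m))
    (i : Fin n) : count (x ∘ blockPerm σ τ) i = count x (σ i) := by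
  simp only [count, Function.comp_apply, Fin.blockPerm_castAdd, Fin.blockPerm_natAdd]
  exact card_filter_comp_perm τ (fun j => x (Fin.natAdd n j) ≤ x (Fin.castAdd m (σ i)))

theorem exists_blockPerm_sorted {x : Fin (n + m) → ℝ} (hx : Function.Injective x) :
    ∃ (σ : Perm (Fin n)) (τ : Perm (Fin m)),
      StrictMono (x ∘ blockPerm σ τ ∘ Fin.castAdd m) ∧
      StrictMono (x ∘ blockPerm σ τ ∘ Fin.natAdd n) ∧
      Multiset.map (count (x ∘ blockPerm σ τ)) (univ : Finset (Fin n)).val =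
        Multiset.map (count x) univ.val := by
  set σ := Tuple.sort (x ∘ Fin.castAdd m)
  set τ := Tuple.sort (x ∘ Fin.natAdd n)
  have hcast : x ∘ blockPerm σ τ ∘ Fin.castAdd m = (x ∘ Fin.castAdd m) ∘ σ := by
    funext i; simp
  have hnat : x ∘ blockPerm σ τ ∘ Fin.natAdd n = (x ∘ Fin.natAdd n) ∘ τ := by
    funext j; simp
  refine ⟨σ, τ, ?_, ?_, ?_⟩
  · rw [hcast]
    exact (Tuple.monotone_sort _).strictMono_of_injective
      ((hx.comp (Fin.castAdd_injective n m)).comp σ.injective)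
  · rw [hnat]
    exact (Tuple.monotone_sort _).strictMono_of_injective
      ((hx.comp (Fin.natAdd_injective m n)).comp τ.injective)
  · rw [funext (count_comp_blockPerm x σ τ), ← Function.comp_def, ← Multiset.map_map,
      Multiset.map_univ_val_equiv]

section Sorted

variable {x y : Fin (n + m) → ℝ}

theorem count_monotone (hx : Monotone (x ∘ Fin.castAdd m)) : Monotone (count x) :=
  fun _ _ hii' => card_le_card (monotone_filter_right _ fun _ _ hj => hj.trans (hx hii'))

theorem natAdd_le_castAdd_iff (hw : Monotone (x ∘ Fin.natAdd n)) (i : Fin n) (j : Fin m) :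
    x (Fin.natAdd n j) ≤ x (Fin.castAdd m i) ↔ (j : ℕ) < count x i :=
  (hw.lt_card_filter_le_iff _ j).symm

theorem castAdd_le_natAdd_iff (hx : Function.Injective x) (hw : Monotone (x ∘ Fin.natAdd n))
    (i : Fin n) (j : Fin m) :
    x (Fin.castAdd m i) ≤ x (Fin.natAdd n j) ↔ count x i ≤ j := by
  have hij : Fin.castAdd m i ≠ Fin.natAdd n j :=
    Fin.ne_of_val_ne (by simp only [Fin.val_castAdd, Fin.val_natAdd]; omega)
  rw [(hx.ne hij).le_iff_lt, ← not_le, natAdd_le_castAdd_iff hw, not_lt]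

theorem le_iff_le_of_count_eq (hx : Function.Injective x) (hy : Function.Injective y)
    (hxu : StrictMono (x ∘ Fin.castAdd m)) (hxw : StrictMono (x ∘ Fin.natAdd n))
    (hyu : StrictMono (y ∘ Fin.castAdd m)) (hyw : StrictMono (y ∘ Fin.natAdd n))
    (h : count x = count y) (k l : Fin (n + m)) : x k ≤ x l ↔ y k ≤ y l := by
  induction k using Fin.addCases with
  | left i =>
    induction l using Fin.addCases with
    | left i' => exact hxu.le_iff_le.trans hyu.le_iff_le.symm
    | right j =>
      rw [castAdd_le_natAdd_iff hx hxw.monotone, castAdd_le_natAdd_iff hy hyw.monotone, h]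
  | right j =>
    induction l using Fin.addCases with
    | left i => rw [natAdd_le_castAdd_iff hxw.monotone, natAdd_le_castAdd_iff hyw.monotone, h]
    | right j' => exact hxw.le_iff_le.trans hyw.le_iff_le.symm

end Sorted

end Ranc

open Ranc

/-- if `f` is invariant under componentwise strictly increasing
transformations and under permutations that do not exchange investigated statistics with
negative control statistics, then `f(T)` is a function of the multiset of RANC p-values:
any two tie-free vectors of statistics with the same multiset of RANC p-values give the
same value of `f`. -/
theorem stmt11 (n m : ℕ) (f : (Fin (n + m) → ℝ) → ℝ)
    (hmono : ∀ (x : Fin (n + m) → ℝ) (g : ℝ → ℝ), StrictMono g →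
      f (fun k => g (x k)) = f x)
    (hperm : ∀ (x : Fin (n + m) → ℝ) (e : Equiv.Perm (Fin (n + m))),
      (∀ k : Fin (n + m), (k : ℕ) < n ↔ ((e k : Fin (n + m)) : ℕ) < n) →
      f (fun k => x (e k)) = f x) :
    ∀ x y : Fin (n + m) → ℝ, Function.Injective x → Function.Injective y →
      (Multiset.map (fun i : Fin n => rancVec n m x i) (Finset.univ : Finset (Fin n)).val =
        Multiset.map (fun i : Fin n => rancVec n m y i) (Finset.univ : Finset (Fin n)).val) →
      f x = f y := by
  intro x y hx hy hp
  obtain ⟨σ, τ, hxu, hxw, hxc⟩ := exists_blockPerm_sorted hx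
  obtain ⟨σ', τ', hyu, hyw, hyc⟩ := exists_blockPerm_sorted hy
  have hc : count (x ∘ blockPerm σ τ) = count (y ∘ blockPerm σ' τ') :=
    eq_of_monotone_of_map_univ_eq (count_monotone hxu.monotone) (count_monotone hyu.monotone)
      (by rw [hxc, hyc, map_count_eq_of_map_rancVec_eq hp])
  obtain ⟨g, hg, hgxy⟩ := exists_strictMono_comp_eq_of_le_iff_le
    (le_iff_le_of_count_eq (hx.comp (blockPerm σ τ).injective)
      (hy.comp (blockPerm σ' τ').injective) hxu hxw hyu hyw hc)
  calc f x = f (x ∘ blockPerm σ τ) := (hperm x _ (Fin.lt_iff_blockPerm_lt σ τ)).symm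
    _ = f (g ∘ x ∘ blockPerm σ τ) := (hmono _ g hg).symm
    _ = f (y ∘ blockPerm σ' τ') := by rw [hgxy]
    _ = f y := hperm y _ (Fin.lt_iff_blockPerm_lt σ' τ')
end

section
/- Let R_λ(t) = F_0(t) − λF(t) with minimizer τ*_λ, where F_0 and F have density functions f_0 and f. Assume f(τ*_λ) > 0, f_0(τ*_λ) > 0, f' and f_0' exist at τ*_λ, and (f_0/f)'(τ*_λ) > 0. Then there exist constants C' > 0 and D' > 0 such that R_λ(τ*_λ) ≤ R_λ(t) − C'(t − τ*_λ)^2 for every t with |t − τ*_λ| ≤ D'. -/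
/-!
At the minimiser the first-order condition gives `f₀ = λ f`, so the quotient rule turns
`(f₀/f)' > 0` into `(f₀ - λ f)' > 0`: the function `R_λ` has vanishing first and positive
second derivative at `τ*`. The second-derivative test, applied to `R_λ(t) - C'(t - τ*)²` with
`C'` below half that second derivative, shows that this function still has a local minimum at
`τ*`.
-/

open Filter Topology

theorem isLocalMin_sub_mul_sq {g g' : ℝ → ℝ} {a K c : ℝ}
    (hg : ∀ t, HasDerivAt g (g' t) t) (ha : g' a = 0) (hK : HasDerivAt g' K a)
    (hc : 2 * c < K) :
    IsLocalMin (fun t => g t - c * (t - a) ^ 2) a := by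
  have hsq : ∀ t : ℝ, HasDerivAt (fun t => (t - a) ^ 2) (2 * (t - a)) t := fun t => by
    simpa [Pi.pow_def] using ((hasDerivAt_id t).sub_const a).pow 2
  have hderiv : deriv (fun t => g t - c * (t - a) ^ 2) = fun t => g' t - c * (2 * (t - a)) :=
    funext fun t => ((hg t).sub ((hsq t).const_mul c)).deriv
  have hsecond : HasDerivAt (fun t => g' t - c * (2 * (t - a))) (K - c * (2 * 1)) a :=
    hK.sub ((((hasDerivAt_id a).sub_const a).const_mul 2).const_mul c)
  refine isLocalMin_of_deriv_deriv_pos ?_ ?_ ?_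
  · rw [hderiv, hsecond.deriv]
    linarith
  · simp [hderiv, ha]
  · exact ((hg a).sub ((hsq a).const_mul c)).continuousAt

theorem mul_deriv_div_eq_of_eq_const_mul {f f₀ : ℝ → ℝ} {a lam f' f₀' r : ℝ}
    (hf : HasDerivAt f f' a) (hf₀ : HasDerivAt f₀ f₀' a)
    (hr : HasDerivAt (fun t => f₀ t / f t) r a) (ha : f a ≠ 0) (heq : f₀ a = lam * f a) :
    f a * r = f₀' - lam * f' := by
  rw [hr.unique (hf₀.div hf ha), heq]
  field_simp

theorem stmt13_general (F F₀ f f₀ : ℝ → ℝ) (lam : ℝ)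
    (hF : ∀ t : ℝ, HasDerivAt F (f t) t)
    (hF₀ : ∀ t : ℝ, HasDerivAt F₀ (f₀ t) t)
    (τstar : ℝ)
    (hmin : ∀ t : ℝ, F₀ τstar - lam * F τstar ≤ F₀ t - lam * F t)
    (hfpos : 0 < f τstar)
    (f' f₀' : ℝ)
    (hf' : HasDerivAt f f' τstar) (hf₀' : HasDerivAt f₀ f₀' τstar)
    (r : ℝ) (hr : HasDerivAt (fun t => f₀ t / f t) r τstar) (hrpos : 0 < r) :
    ∃ C' > (0 : ℝ), ∃ D' > (0 : ℝ), ∀ t : ℝ, |t - τstar| ≤ D' →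
      F₀ τstar - lam * F τstar ≤ (F₀ t - lam * F t) - C' * (t - τstar) ^ 2 := by
  have hR : ∀ t, HasDerivAt (fun t => F₀ t - lam * F t) (f₀ t - lam * f t) t :=
    fun t => (hF₀ t).sub ((hF t).const_mul lam)
  have hcrit : f₀ τstar - lam * f τstar = 0 :=
    (IsMinOn.isLocalMin (f := fun t => F₀ t - lam * F t) (fun t _ => hmin t) univ_mem)
      |>.hasDerivAt_eq_zero (hR τstar)
  have hK : 0 < f₀' - lam * f' := by
    rw [← mul_deriv_div_eq_of_eq_const_mul hf' hf₀' hr hfpos.ne' (by linarith)]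
    positivity
  have hloc := isLocalMin_sub_mul_sq (c := (f₀' - lam * f') / 4) hR hcrit
    (hf₀'.sub (hf'.const_mul lam)) (by linarith)
  obtain ⟨D, hD, hball⟩ := Metric.nhds_basis_closedBall.eventually_iff.mp hloc
  refine ⟨(f₀' - lam * f') / 4, by positivity, D, hD, fun t ht => ?_⟩
  simpa using hball (by rwa [Metric.mem_closedBall, Real.dist_eq])

/-- let `R_λ(t) = F₀(t) - λF(t)` with minimizer `τ*`, where the CDFs `F₀`
and `F` have densities `f₀` and `f`. If `f(τ*) > 0`, `f₀(τ*) > 0`, `f'` and `f₀'` exist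
at `τ*`, and `(f₀/f)'(τ*) > 0`, then there are constants `C' > 0` and `D' > 0` such that
`R_λ(τ*) ≤ R_λ(t) - C'(t - τ*)²` whenever `|t - τ*| ≤ D'`. -/
theorem stmt13 (F F₀ f f₀ : ℝ → ℝ) (lam : ℝ) (hlam : 0 < lam)
    (hF : ∀ t : ℝ, HasDerivAt F (f t) t)
    (hF₀ : ∀ t : ℝ, HasDerivAt F₀ (f₀ t) t)
    (τstar : ℝ)
    (hmin : ∀ t : ℝ, F₀ τstar - lam * F τstar ≤ F₀ t - lam * F t)
    (hfpos : 0 < f τstar) (hf₀pos : 0 < f₀ τstar)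
    (f' f₀' : ℝ)
    (hf' : HasDerivAt f f' τstar) (hf₀' : HasDerivAt f₀ f₀' τstar)
    (r : ℝ) (hr : HasDerivAt (fun t => f₀ t / f t) r τstar) (hrpos : 0 < r) :
    ∃ C' > (0 : ℝ), ∃ D' > (0 : ℝ), ∀ t : ℝ, |t - τstar| ≤ D' →
      F₀ τstar - lam * F τstar ≤ (F₀ t - lam * F t) - C' * (t - τstar) ^ 2 :=
  stmt13_general F F₀ f f₀ lam hF hF₀ τstar hmin hfpos f' f₀' hf' hf₀' r hr hrpos
end

section
/- Consider i.i.d. samples of size n from a CDF F with density f and independent i.i.d. samples of size m from a CDF F_0 with density f_0. Suppose: f(τ*_λ), f_0(τ*_λ) > 0 with f', f_0' existing at τ*_λ; f ≤ f_max and f_0 ≤ f_{0,max} on a neighborhood |t − τ*_λ| ≤ D; (f_0/f)'(τ*_λ) > 0; and for every δ > 0 there exists ε_δ > 0 with F_0(t) − λF(t) > F_0(τ*_λ) − λF(τ*_λ) + ε_δ whenever |t − τ*_λ| > δ. Then the empirical minimizer τ̂ of F̂_{0,m}(t) − λF̂_n(t) converges to τ*_λ in probability as n, m → ∞. -/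
/-!
The empirical risk is `F̂₀ - λ F̂`, so its distance to the population risk `F₀ - λ F` is
controlled, uniformly in `t`, by the Glivenko–Cantelli deviations of the two empirical CDFs.
These tend to zero in probability: at each point by the strong law of large numbers, and
uniformly because a continuous CDF is bracketed to precision `η` by finitely many points.
On the event that both deviations are small, the empirical minimizer has population risk
within `ε` of the minimum, so by the separation assumption it lies within `δ` of `τ*`.
-/

open MeasureTheory ProbabilityTheory Filter
open scoped ENNReal Topology

/-- The empirical risk `ℓ(t) = F̂₀_m(t) - λ F̂_n(t)` built from the first `m` negative
control samples `X` and the first `n` investigated samples `Y`. -/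
noncomputable def empRisk {Ω : Type*} (X Y : ℕ → Ω → ℝ) (lam : ℝ) (m n : ℕ)
    (ω : Ω) (t : ℝ) : ℝ :=
  (({j : ℕ | j < m ∧ X j ω ≤ t} : Set ℕ).ncard : ℝ) / m -
    lam * ((({i : ℕ | i < n ∧ Y i ω ≤ t} : Set ℕ).ncard : ℝ) / n)

noncomputable def empCDF {Ω : Type*} (W : ℕ → Ω → ℝ) (m : ℕ) (ω : Ω) (t : ℝ) : ℝ :=
  (({j : ℕ | j < m ∧ W j ω ≤ t} : Set ℕ).ncard : ℝ) / m

section EmpiricalCDF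

variable {Ω : Type*} (W : ℕ → Ω → ℝ) (m : ℕ) (ω : Ω)

lemma empCDF_eq_sum_indicator (t : ℝ) :
    empCDF W m ω t = (∑ j ∈ Finset.range m, (Set.Iic t).indicator 1 (W j ω)) / m := by
  classical
  have hset : {j : ℕ | j < m ∧ W j ω ≤ t} = ↑((Finset.range m).filter fun j => W j ω ≤ t) := by
    ext j; simp
  rw [empCDF, hset, Set.ncard_coe_finset, Finset.card_filter, Nat.cast_sum]
  congr 1
  refine Finset.sum_congr rfl fun j _ => ?_
  by_cases h : W j ω ≤ t <;> simp [h]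

lemma empRisk_eq_empCDF (Y : ℕ → Ω → ℝ) (lam : ℝ) (n : ℕ) (t : ℝ) :
    empRisk W Y lam m n ω t = empCDF W m ω t - lam * empCDF Y n ω t :=
  rfl

lemma monotone_empCDF : Monotone (empCDF W m ω) := by
  intro s t hst
  unfold empCDF
  gcongr ?_ / _
  have hsub : {j | j < m ∧ W j ω ≤ s} ⊆ {j | j < m ∧ W j ω ≤ t} :=
    fun j hj => ⟨hj.1, hj.2.trans hst⟩
  exact_mod_cast Set.ncard_le_ncard hsub ((Set.finite_lt_nat m).subset fun j hj => hj.1)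

lemma empCDF_nonneg (t : ℝ) : 0 ≤ empCDF W m ω t := by
  unfold empCDF; positivity

lemma empCDF_le_one (t : ℝ) : empCDF W m ω t ≤ 1 := by
  unfold empCDF
  refine div_le_one_of_le₀ ?_ m.cast_nonneg
  have : ({j : ℕ | j < m ∧ W j ω ≤ t} : Set ℕ).ncard ≤ (Set.Iio m).ncard :=
    Set.ncard_le_ncard (fun j hj => hj.1) (Set.finite_Iio m)
  simpa using this

end EmpiricalCDF

def IsBracketing (G : ℝ → ℝ) (η : ℝ) (S : Finset ℝ) : Prop :=
  ∀ t, (∃ s ∈ S, t ≤ s ∧ G s ≤ η) ∨ (∃ s ∈ S, s ≤ t ∧ 1 - η ≤ G s) ∨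
    ∃ s ∈ S, ∃ s' ∈ S, s ≤ t ∧ t ≤ s' ∧ G s' ≤ G s + η

lemma abs_sub_lt_of_isBracketing {G Φ : ℝ → ℝ} {η : ℝ} {S : Finset ℝ}
    (hS : IsBracketing G η S) (hG : Monotone G) (hΦ : Monotone Φ)
    (hG₀ : ∀ t, 0 ≤ G t) (hG₁ : ∀ t, G t ≤ 1) (hΦ₀ : ∀ t, 0 ≤ Φ t) (hΦ₁ : ∀ t, Φ t ≤ 1)
    (hclose : ∀ s ∈ S, |Φ s - G s| < η) (t : ℝ) :
    |Φ t - G t| < 2 * η := by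
  rcases hS t with ⟨s, hs, hts, hGs⟩ | ⟨s, hs, hst, hGs⟩ | ⟨s, hs, s', hs', hst, hts', hGs'⟩
  · have := abs_lt.mp (hclose s hs)
    rw [abs_lt]
    constructor <;> linarith [hG hts, hΦ hts, hG₀ t, hΦ₀ t]
  · have := abs_lt.mp (hclose s hs)
    rw [abs_lt]
    constructor <;> linarith [hG hst, hΦ hst, hG₁ t, hΦ₁ t]
  · have := abs_lt.mp (hclose s hs)
    have := abs_lt.mp (hclose s' hs')
    rw [abs_lt]
    constructor <;> linarith [hG hst, hΦ hst, hG hts', hΦ hts']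

lemma exists_lt_le_add_mul_le {a h t : ℝ} {k : ℕ} (hh : 0 < h) (hk : 1 ≤ k) (hat : a ≤ t)
    (htk : t ≤ a + k * h) : ∃ i < k, a + i * h ≤ t ∧ t ≤ a + (i + 1) * h := by
  set i := min ⌊(t - a) / h⌋₊ (k - 1) with hi_def
  refine ⟨i, by omega, ?_, ?_⟩
  · have : (i : ℝ) ≤ (t - a) / h :=
      (Nat.cast_le.mpr (min_le_left _ _)).trans
        (Nat.floor_le (div_nonneg (sub_nonneg.mpr hat) hh.le))
    rw [le_div_iff₀ hh] at this
    linarith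
  · rcases min_choice ⌊(t - a) / h⌋₊ (k - 1) with hi | hi <;> rw [hi_def, hi]
    · have := Nat.lt_floor_add_one ((t - a) / h)
      rw [div_lt_iff₀ hh] at this
      linarith
    · rwa [Nat.cast_sub hk, Nat.cast_one, sub_add_cancel]

lemma exists_isBracketing {G : ℝ → ℝ} (hG : Continuous G)
    (hbot : Tendsto G atBot (𝓝 0)) (htop : Tendsto G atTop (𝓝 1)) {η : ℝ} (hη : 0 < η) :
    ∃ S, IsBracketing G η S := by
  obtain ⟨b, hb⟩ := (htop.eventually (lt_mem_nhds (sub_lt_self 1 hη))).exists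
  obtain ⟨a, hGa, hab⟩ :=
    ((hbot.eventually (gt_mem_nhds hη)).and (eventually_le_atBot (b - 1))).exists
  have hab : a < b := by linarith
  obtain ⟨δ, hδ, hGδ⟩ := Metric.uniformContinuousOn_iff.mp
    ((isCompact_Icc (a := a) (b := b)).uniformContinuousOn_of_continuous hG.continuousOn) η hη
  obtain ⟨k, hk⟩ := exists_nat_gt ((b - a) / δ)
  have hk₀ : (0 : ℝ) < k := (div_pos (sub_pos.mpr hab) hδ).trans hk
  set h := (b - a) / k
  have hh₀ : 0 < h := div_pos (sub_pos.mpr hab) hk₀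
  have hhδ : h < δ := by rwa [div_lt_comm₀ hk₀ hδ]
  have hb_eq : a + k * h = b := by unfold h; field_simp; ring
  let x : ℕ → ℝ := fun i => a + i * h
  have hx_mem : ∀ i ≤ k, x i ∈ Set.Icc a b := fun i hi => by
    have : (i : ℝ) * h ≤ k * h := by gcongr
    simp only [x, Set.mem_Icc]
    constructor <;> nlinarith
  refine ⟨(Finset.range (k + 1)).image x, fun t => ?_⟩
  simp only [Finset.mem_image, Finset.mem_range, exists_exists_and_eq_and]
  rcases lt_or_ge t a with hta | hta
  · exact Or.inl ⟨0, by omega, by simp [x, hta.le], by simpa [x] using hGa.le⟩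
  rcases lt_or_ge b t with hbt | htb
  · exact Or.inr (Or.inl ⟨k, by omega, by simp only [x, hb_eq]; exact hbt.le,
      by simp only [x, hb_eq]; exact hb.le⟩)
  obtain ⟨i, hik, hxi, hxi'⟩ :=
    exists_lt_le_add_mul_le hh₀ (by exact_mod_cast hk₀) hta (hb_eq ▸ htb)
  have hclose := hGδ _ (hx_mem (i + 1) hik) _ (hx_mem i hik.le) (by
    rw [Real.dist_eq, abs_lt]
    constructor <;> simp only [x] <;> push_cast <;> linarith)
  rw [Real.dist_eq, abs_lt] at hclose
  exact Or.inr (Or.inr ⟨i, by omega, i + 1, by omega, hxi, by simpa [x] using hxi', by linarith⟩)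

section Sample

variable {Ω : Type*} [MeasurableSpace Ω] {μ : Measure Ω} {W : ℕ → Ω → ℝ}

lemma measurable_empCDF (hW : ∀ j, Measurable (W j)) (m : ℕ) (t : ℝ) :
    Measurable fun ω => empCDF W m ω t := by
  simp_rw [empCDF_eq_sum_indicator]
  exact (Finset.measurable_sum _ fun j _ =>
    (measurable_const.indicator measurableSet_Iic).comp (hW j)).div_const _

variable [IsProbabilityMeasure μ]

lemma cdf_map_eq_of_toReal_measure_le_eq {V : Ω → ℝ} {G : ℝ → ℝ} (hV : Measurable V)
    (hG : ∀ t, (μ {ω | V ω ≤ t}).toReal = G t) : cdf (μ.map V) = G := by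
  have := Measure.isProbabilityMeasure_map (μ := μ) hV.aemeasurable
  ext t
  rw [cdf_eq_real, map_measureReal_apply hV measurableSet_Iic, ← hG t]
  rfl

lemma tendstoInMeasure_empCDF (hW : ∀ j, Measurable (W j))
    (hindep : Pairwise fun i j => W i ⟂ᵢ[μ] W j) (hident : ∀ j, IdentDistrib (W j) (W 0) μ μ)
    (t : ℝ) :
    TendstoInMeasure μ (fun m ω => empCDF W m ω t) atTop (fun _ => cdf (μ.map (W 0)) t) := by
  have hind : Measurable ((Set.Iic t).indicator (1 : ℝ → ℝ)) :=
    measurable_const.indicator measurableSet_Iic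
  have hlaw := strong_law_ae_real (fun j => (Set.Iic t).indicator 1 ∘ W j)
    ((integrable_const (1 : ℝ)).indicator (measurableSet_Iic.preimage (hW 0)))
    (fun i j hij => (hindep hij).comp hind hind) (fun j => (hident j).comp hind)
  have hmean : μ[(Set.Iic t).indicator 1 ∘ W 0] = cdf (μ.map (W 0)) t := by
    have := Measure.isProbabilityMeasure_map (μ := μ) (hW 0).aemeasurable
    rw [cdf_eq_real, map_measureReal_apply (hW 0) measurableSet_Iic, ← integral_indicator_one
      (measurableSet_Iic.preimage (hW 0))]
    rfl
  refine tendstoInMeasure_of_tendsto_ae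
    (fun m => (measurable_empCDF hW m t).aestronglyMeasurable) ?_
  filter_upwards [hlaw] with ω hω
  rw [hmean] at hω
  simpa [empCDF_eq_sum_indicator] using hω

lemma identDistrib_of_toReal_measure_le_eq {G : ℝ → ℝ} (hW : ∀ j, Measurable (W j))
    (hG : ∀ j t, (μ {ω | W j ω ≤ t}).toReal = G t) (j : ℕ) :
    IdentDistrib (W j) (W 0) μ μ := by
  have := Measure.isProbabilityMeasure_map (μ := μ) (hW j).aemeasurable
  have := Measure.isProbabilityMeasure_map (μ := μ) (hW 0).aemeasurable
  refine ⟨(hW j).aemeasurable, (hW 0).aemeasurable,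
    Measure.eq_of_cdf _ _ (StieltjesFunction.ext fun t => ?_)⟩
  rw [cdf_map_eq_of_toReal_measure_le_eq (hW j) (hG j),
    cdf_map_eq_of_toReal_measure_le_eq (hW 0) (hG 0)]

lemma tendsto_measure_exists_le_abs_empCDF_sub {G : ℝ → ℝ} (hW : ∀ j, Measurable (W j))
    (hindep : Pairwise fun i j => W i ⟂ᵢ[μ] W j)
    (hG : ∀ j t, (μ {ω | W j ω ≤ t}).toReal = G t) (hGc : Continuous G) {η : ℝ} (hη : 0 < η) :
    Tendsto (fun m => μ {ω | ∃ t, η ≤ |empCDF W m ω t - G t|}) atTop (𝓝 0) := by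
  have hcdf := cdf_map_eq_of_toReal_measure_le_eq (hW 0) (hG 0)
  have := Measure.isProbabilityMeasure_map (μ := μ) (hW 0).aemeasurable
  obtain ⟨S, hS⟩ := exists_isBracketing hGc (hcdf ▸ tendsto_cdf_atBot _)
    (hcdf ▸ tendsto_cdf_atTop _) (by positivity : 0 < η / 3)
  have hsub : ∀ m, {ω | ∃ t, η ≤ |empCDF W m ω t - G t|} ⊆
      ⋃ s ∈ S, {ω | η / 3 ≤ dist (empCDF W m ω s) (G s)} := by
    rintro m ω ⟨t, ht⟩
    by_contra hclose
    simp only [Set.mem_iUnion, Set.mem_ofPred_eq, Real.dist_eq, not_exists, not_le] at hclose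
    have := abs_sub_lt_of_isBracketing hS (hcdf ▸ monotone_cdf _) (monotone_empCDF W m ω)
      (hcdf ▸ cdf_nonneg _) (hcdf ▸ cdf_le_one _) (empCDF_nonneg W m ω) (empCDF_le_one W m ω)
      hclose t
    linarith
  have hpoint : ∀ s, Tendsto (fun m => μ {ω | η / 3 ≤ dist (empCDF W m ω s) (G s)}) atTop (𝓝 0) :=
    fun s => hcdf ▸ tendstoInMeasure_iff_dist.mp (tendstoInMeasure_empCDF hW hindep
      (identDistrib_of_toReal_measure_le_eq hW hG) s) (η / 3) (by positivity)
  refine tendsto_of_tendsto_of_tendsto_of_le_of_le tendsto_const_nhds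
    (by simpa using tendsto_finsetSum S fun s _ => hpoint s) (fun m => zero_le)
    fun m => (measure_mono (hsub m)).trans (measure_biUnion_finset_le _ _)

end Sample

lemma lt_add_of_le_of_forall_abs_sub_lt {R R' : ℝ → ℝ} {ε x y : ℝ}
    (hdev : ∀ t, |R' t - R t| < ε / 2) (hxy : R' x ≤ R' y) : R x < R y + ε := by
  linarith [(abs_lt.mp (hdev x)).1, (abs_lt.mp (hdev y)).2]

lemma abs_empRisk_sub_le {Ω : Type*} (X Y : ℕ → Ω → ℝ) (F F₀ : ℝ → ℝ) (lam : ℝ) (m n : ℕ)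
    (ω : Ω) (t : ℝ) :
    |empRisk X Y lam m n ω t - (F₀ t - lam * F t)| ≤
      |empCDF X m ω t - F₀ t| + |lam| * |empCDF Y n ω t - F t| := by
  have hsplit : empRisk X Y lam m n ω t - (F₀ t - lam * F t) =
      (empCDF X m ω t - F₀ t) - lam * (empCDF Y n ω t - F t) := by
    rw [empRisk_eq_empCDF]; ring
  rw [hsplit, ← abs_mul]
  exact abs_sub _ _

lemma abs_sub_le_of_empRisk_le {Ω : Type*} {X Y : ℕ → Ω → ℝ} {F F₀ : ℝ → ℝ}
    {lam ε η δ τ τstar : ℝ} {m n : ℕ} {ω : Ω}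
    (hsep : ∀ t, δ < |t - τstar| → F₀ τstar - lam * F τstar + ε < F₀ t - lam * F t)
    (hτ : empRisk X Y lam m n ω τ ≤ empRisk X Y lam m n ω τstar) (hη : |lam| * η ≤ ε / 4)
    (hX : ∀ t, |empCDF X m ω t - F₀ t| < ε / 4) (hY : ∀ t, |empCDF Y n ω t - F t| < η) :
    |τ - τstar| ≤ δ := by
  have hdev : ∀ t, |empRisk X Y lam m n ω t - (F₀ t - lam * F t)| < ε / 2 := fun t =>
    calc _ ≤ |empCDF X m ω t - F₀ t| + |lam| * |empCDF Y n ω t - F t| :=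
          abs_empRisk_sub_le X Y F F₀ lam m n ω t
      _ < ε / 4 + ε / 4 := add_lt_add_of_lt_of_le (hX t)
          ((mul_le_mul_of_nonneg_left (hY t).le (abs_nonneg lam)).trans hη)
      _ = ε / 2 := by ring
  by_contra! hfar
  exact (hsep τ hfar).not_gt (lt_add_of_le_of_forall_abs_sub_lt hdev hτ)

theorem stmt14_general {Ω : Type*} [MeasurableSpace Ω] (μ : Measure Ω) [IsProbabilityMeasure μ]
    (F F₀ f f₀ : ℝ → ℝ) (lam : ℝ)
    -- densities:
    (hF : ∀ t : ℝ, HasDerivAt F (f t) t)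
    (hF₀ : ∀ t : ℝ, HasDerivAt F₀ (f₀ t) t)
    -- infinite i.i.d. samples: X from F₀ and Y from F, all mutually independent
    (X Y : ℕ → Ω → ℝ)
    (hXmeas : ∀ j, Measurable (X j)) (hYmeas : ∀ i, Measurable (Y i))
    (hindep : iIndepFun
      (Sum.elim X Y) μ)
    (hX : ∀ j : ℕ, ∀ t : ℝ, (μ {ω | X j ω ≤ t}).toReal = F₀ t)
    (hY : ∀ i : ℕ, ∀ t : ℝ, (μ {ω | Y i ω ≤ t}).toReal = F t)
    -- population minimizer τ*:
    (τstar : ℝ)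
    -- assumption 4: well-separated minimum
    (hsep : ∀ δ : ℝ, 0 < δ → ∃ ε : ℝ, 0 < ε ∧ ∀ t : ℝ, δ < |t - τstar| →
      F₀ τstar - lam * F τstar + ε < F₀ t - lam * F t)
    -- empirical risk minimizers:
    (τhat : ℕ → ℕ → Ω → ℝ)
    (hhat : ∀ n m : ℕ, ∀ ω : Ω, ∀ t : ℝ,
      empRisk X Y lam m n ω (τhat n m ω) ≤ empRisk X Y lam m n ω t) :
    ∀ δ : ℝ, 0 < δ →
      Tendsto (fun p : ℕ × ℕ => μ {ω | δ < |τhat p.1 p.2 ω - τstar|})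
        atTop (𝓝 0) := by
  intro δ hδ
  obtain ⟨ε, hε, hsep⟩ := hsep δ hδ
  set η := ε / (4 * (|lam| + 1))
  have hη : |lam| * η ≤ ε / 4 :=
    calc |lam| * η ≤ (|lam| + 1) * η := by gcongr; linarith
      _ = ε / 4 := by unfold η; field_simp
  have hXunif := tendsto_measure_exists_le_abs_empCDF_sub hXmeas
    (fun i j hij => by simpa using hindep.indepFun (Sum.inl_injective.ne hij)) hX
    (continuous_iff_continuousAt.mpr fun t => (hF₀ t).continuousAt) (by positivity : 0 < ε / 4)
  have hYunif := tendsto_measure_exists_le_abs_empCDF_sub hYmeas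
    (fun i j hij => by simpa using hindep.indepFun (Sum.inr_injective.ne hij)) hY
    (continuous_iff_continuousAt.mpr fun t => (hF t).continuousAt) (by positivity : 0 < η)
  have hsub : ∀ n m, {ω | δ < |τhat n m ω - τstar|} ⊆
      {ω | ∃ t, ε / 4 ≤ |empCDF X m ω t - F₀ t|} ∪ {ω | ∃ t, η ≤ |empCDF Y n ω t - F t|} := by
    intro n m ω hfar
    by_contra hclose
    simp only [Set.mem_union, Set.mem_ofPred_eq, not_or, not_exists, not_le] at hclose
    exact hfar.not_ge (abs_sub_le_of_empRisk_le hsep (hhat n m ω τstar) hη hclose.1 hclose.2)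
  rw [← prod_atTop_atTop_eq]
  refine tendsto_of_tendsto_of_tendsto_of_le_of_le tendsto_const_nhds
    (by simpa using (hXunif.comp tendsto_snd).add (hYunif.comp tendsto_fst)) (fun p => zero_le)
    fun p => (measure_mono (hsub p.1 p.2)).trans (measure_union_le _ _)

/-- under the stated density/regularity/separation assumptions, the
empirical minimizer `τ̂ = argmin (F̂₀_m - λF̂_n)` converges in probability to
`τ* = argmin (F₀ - λF)` as `n, m → ∞`. -/
theorem stmt14 {Ω : Type*} [MeasurableSpace Ω] (μ : Measure Ω) [IsProbabilityMeasure μ]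
    (F F₀ f f₀ : ℝ → ℝ) (lam : ℝ) (hlam : 0 < lam)
    -- densities:
    (hF : ∀ t : ℝ, HasDerivAt F (f t) t)
    (hF₀ : ∀ t : ℝ, HasDerivAt F₀ (f₀ t) t)
    -- infinite i.i.d. samples: X from F₀ and Y from F, all mutually independent
    (X Y : ℕ → Ω → ℝ)
    (hXmeas : ∀ j, Measurable (X j)) (hYmeas : ∀ i, Measurable (Y i))
    (hindep : iIndepFun
      (Sum.elim X Y) μ)
    (hX : ∀ j : ℕ, ∀ t : ℝ, (μ {ω | X j ω ≤ t}).toReal = F₀ t)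
    (hY : ∀ i : ℕ, ∀ t : ℝ, (μ {ω | Y i ω ≤ t}).toReal = F t)
    -- population minimizer τ*:
    (τstar : ℝ)
    (hmin : ∀ t : ℝ, F₀ τstar - lam * F τstar ≤ F₀ t - lam * F t)
    -- assumption 1: positive differentiable densities at τ*
    (hfpos : 0 < f τstar) (hf₀pos : 0 < f₀ τstar)
    (f' f₀' : ℝ)
    (hf' : HasDerivAt f f' τstar) (hf₀' : HasDerivAt f₀ f₀' τstar)
    -- assumption 2: bounded densities near τ*
    (fmax f₀max D : ℝ) (hD : 0 < D)
    (hfbd : ∀ t : ℝ, |t - τstar| ≤ D → f t ≤ fmax)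
    (hf₀bd : ∀ t : ℝ, |t - τstar| ≤ D → f₀ t ≤ f₀max)
    -- assumption 3: monotone likelihood ratio at τ*
    (r : ℝ) (hr : HasDerivAt (fun t => f₀ t / f t) r τstar) (hrpos : 0 < r)
    -- assumption 4: well-separated minimum
    (hsep : ∀ δ : ℝ, 0 < δ → ∃ ε : ℝ, 0 < ε ∧ ∀ t : ℝ, δ < |t - τstar| →
      F₀ τstar - lam * F τstar + ε < F₀ t - lam * F t)
    -- empirical risk minimizers:
    (τhat : ℕ → ℕ → Ω → ℝ)
    (hhat : ∀ n m : ℕ, ∀ ω : Ω, ∀ t : ℝ,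
      empRisk X Y lam m n ω (τhat n m ω) ≤ empRisk X Y lam m n ω t) :
    ∀ δ : ℝ, 0 < δ →
      Tendsto (fun p : ℕ × ℕ => μ {ω | δ < |τhat p.1 p.2 ω - τstar|})
        atTop (𝓝 0) :=
  stmt14_general μ F F₀ f f₀ lam hF hF₀ X Y hXmeas hYmeas hindep hX hY τstar hsep τhat hhat
end

section
/- Let T_1, T_2 be i.i.d. uniform on [0,1] and T_3, T_4 be i.i.d. Beta(1,2), with all four independent; treat T_3, T_4 as negative controls (m = 2) and let p_1, p_2 be the RANC p-values of T_1, T_2. Then P(p_2 = 1 | p_1 = 1/3) = 4/9 > 5/12 = P(p_2 = 1 | p_1 = 2/3); in particular (p_1, p_2) is not positively regression dependent, even though T_1 and T_2 each (uniformly) stochastically dominate T_3 and T_4. -/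
/-!
Let `G(x) = (1 - x)^2` be the survival function of Beta(1,2). Integrating first over the controls
and then over the values `s, t` of the two uniform statistics, `{p₁ = 1/3}` (both controls above
`s`) has probability `∫ G(s)^2 ds = 1/5` and `{p₁ = 2/3}` (exactly one control above `s`) has
probability `∫ 2 G(s) (1 - G(s)) ds = 4/15`. Intersecting with `{p₂ = 1}` confines the controls
lying above `s` to `(s, t]`, which gives `∫∫_{s<t} (G(s) - G(t))^2 = 4/45` and
`∫∫_{s<t} 2 (1 - G(s)) (G(s) - G(t)) = 1/9`; the conditional probabilities are the ratios.
-/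

open MeasureTheory ProbabilityTheory
open scoped ENNReal

/-- RANC p-values with two statistics `T 0, T 1` under investigation and two negative
controls `T 2, T 3`: `p_i = (1 + #{j ∈ {2,3} : T_j ≤ T_i})/3`. -/
noncomputable def ranc4 {Ω : Type*} (T : Fin 4 → Ω → ℝ) (i : Fin 2) (ω : Ω) : ℝ :=
  ((1 : ℝ) +
      ({j : Fin 2 | T (Fin.natAdd 2 j) ω ≤ T (Fin.castAdd 2 i) ω} : Set (Fin 2)).ncard) / 3

open Set

section PValues

variable {Ω : Type*} (T : Fin 4 → Ω → ℝ) (i : Fin 2) (ω : Ω)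

lemma ranc4_eq_ite : ranc4 T i ω =
    (1 + ((if T 2 ω ≤ T (Fin.castAdd 2 i) ω then 1 else 0) +
      (if T 3 ω ≤ T (Fin.castAdd 2 i) ω then 1 else 0))) / 3 := by
  classical
  rw [ranc4, ncard_eq_toFinset_card', toFinset_ofPred, Finset.card_filter, Fin.sum_univ_two]
  push_cast
  rfl

lemma ranc4_eq_one_third_iff :
    ranc4 T i ω = 1 / 3 ↔ T (Fin.castAdd 2 i) ω < T 2 ω ∧ T (Fin.castAdd 2 i) ω < T 3 ω := by
  rw [ranc4_eq_ite]
  split_ifs <;> grind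

lemma ranc4_eq_two_thirds_iff :
    ranc4 T i ω = 2 / 3 ↔
      (T 2 ω ≤ T (Fin.castAdd 2 i) ω ∧ T (Fin.castAdd 2 i) ω < T 3 ω) ∨
        (T (Fin.castAdd 2 i) ω < T 2 ω ∧ T 3 ω ≤ T (Fin.castAdd 2 i) ω) := by
  rw [ranc4_eq_ite]
  split_ifs <;> grind

lemma ranc4_eq_one_iff :
    ranc4 T i ω = 1 ↔ T 2 ω ≤ T (Fin.castAdd 2 i) ω ∧ T 3 ω ≤ T (Fin.castAdd 2 i) ω := by
  rw [ranc4_eq_ite]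
  split_ifs <;> grind

end PValues

section ProductMeasures

variable {α β γ : Type*} [MeasurableSpace α] [MeasurableSpace β] [MeasurableSpace γ]

lemma prod_prod_apply_eq_lintegral_lintegral {μ : Measure α} {ν : Measure β} {κ : Measure γ}
    [SFinite μ] [SFinite ν] [SFinite κ] {S : Set ((α × β) × γ)} (hS : MeasurableSet S) :
    ((μ.prod ν).prod κ) S = ∫⁻ x, ∫⁻ y, κ (Prod.mk (x, y) ⁻¹' S) ∂ν ∂μ := by
  rw [Measure.prod_apply hS, lintegral_prod _ (measurable_measure_prodMk_left hS).aemeasurable]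

lemma prod_self_union_swap {κ : Measure γ} [SFinite κ] {X Y : Set γ} (hXY : Disjoint X Y)
    (hX : MeasurableSet X) (hY : MeasurableSet Y) :
    (κ.prod κ) (X ×ˢ Y ∪ Y ×ˢ X) = 2 * (κ X * κ Y) := by
  rw [measure_union (disjoint_prod.mpr (Or.inl hXY)) (hY.prod hX), Measure.prod_prod,
    Measure.prod_prod, mul_comm (κ Y), two_mul]

lemma map_prodMk_prodMk_eq_prod {Ω : Type*} [MeasurableSpace Ω] {μ : Measure Ω}
    [IsFiniteMeasure μ] {X : Fin 4 → Ω → β} (hX : ∀ k, Measurable (X k))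
    (hindep : iIndepFun X μ) :
    μ.map (fun ω => ((X 0 ω, X 1 ω), (X 2 ω, X 3 ω))) =
      ((μ.map (X 0)).prod (μ.map (X 1))).prod ((μ.map (X 2)).prod (μ.map (X 3))) := by
  have hpair : ∀ i j : Fin 4, i ≠ j →
      μ.map (fun ω => (X i ω, X j ω)) = (μ.map (X i)).prod (μ.map (X j)) := fun i j hij =>
    (indepFun_iff_map_prod_eq_prod_map_map (hX i).aemeasurable (hX j).aemeasurable).mp
      (hindep.indepFun hij)
  rw [(indepFun_iff_map_prod_eq_prod_map_map ((hX 0).prodMk (hX 1)).aemeasurable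
      ((hX 2).prodMk (hX 3)).aemeasurable).mp
      (hindep.indepFun_prodMk_prodMk hX 0 1 2 3 (by decide) (by decide) (by decide) (by decide)),
    hpair 0 1 (by decide), hpair 2 3 (by decide)]

lemma cond_preimage_eq_map_cond {Ω : Type*} [MeasurableSpace Ω] {μ : Measure Ω} {X : Ω → α}
    (hX : Measurable X) {A B : Set α} (hA : MeasurableSet A) (hB : MeasurableSet B) :
    μ[|X ⁻¹' A] (X ⁻¹' B) = (μ.map X)[|A] B := by
  rw [cond_apply (hX hA), cond_apply hA, Measure.map_apply hX hA,
    Measure.map_apply hX (hA.inter hB), preimage_inter]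

end ProductMeasures

noncomputable section

def uniformIcc : Measure ℝ := volume.restrict (Icc 0 1)

def betaOneTwo : Measure ℝ := uniformIcc.withDensity fun x => ENNReal.ofReal (2 * (1 - x))

instance : IsProbabilityMeasure uniformIcc := ⟨by simp [uniformIcc]⟩

lemma lintegral_uniformIcc_eq_ofReal_intervalIntegral_of_eq_zero {f : ℝ → ℝ≥0∞} {g : ℝ → ℝ}
    {s : ℝ} (hs : s ∈ Icc (0 : ℝ) 1) (hg : ContinuousOn g (Icc s 1))
    (hg_nonneg : ∀ t ∈ Icc s 1, 0 ≤ g t)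
    (hf_zero : ∀ t ∈ Ico 0 s, f t = 0) (hf_eq : ∀ t ∈ Icc s 1, f t = ENNReal.ofReal (g t)) :
    ∫⁻ t, f t ∂uniformIcc = ENNReal.ofReal (∫ t in s..1, g t) := by
  rw [uniformIcc, ← Ico_union_Icc_eq_Icc hs.1 hs.2,
    lintegral_union measurableSet_Icc (disjoint_left.mpr fun _ h₁ h₂ => h₁.2.not_ge h₂.1),
    setLIntegral_congr_fun measurableSet_Ico hf_zero, lintegral_zero, zero_add,
    setLIntegral_congr_fun measurableSet_Icc hf_eq,
    ← ofReal_integral_eq_lintegral_ofReal hg.integrableOn_Icc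
      ((ae_restrict_iff' measurableSet_Icc).mpr (ae_of_all _ hg_nonneg)),
    integral_Icc_eq_integral_Ioc, intervalIntegral.integral_of_le hs.2]

lemma lintegral_uniformIcc_eq_ofReal_intervalIntegral {f : ℝ → ℝ≥0∞} {g : ℝ → ℝ}
    (hg : ContinuousOn g (Icc 0 1)) (hg_nonneg : ∀ t ∈ Icc 0 1, 0 ≤ g t)
    (hf_eq : ∀ t ∈ Icc 0 1, f t = ENNReal.ofReal (g t)) :
    ∫⁻ t, f t ∂uniformIcc = ENNReal.ofReal (∫ t in (0 : ℝ)..1, g t) :=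
  lintegral_uniformIcc_eq_ofReal_intervalIntegral_of_eq_zero ⟨le_rfl, zero_le_one⟩ hg hg_nonneg
    (fun _ ht => absurd ht.2 ht.1.not_gt) hf_eq

lemma lintegral_Icc_betaOneTwo_density {a b : ℝ} (hab : a ≤ b) (hb : b ≤ 1) :
    ∫⁻ x in Icc a b, ENNReal.ofReal (2 * (1 - x)) =
      ENNReal.ofReal ((1 - a) ^ 2 - (1 - b) ^ 2) := by
  have hint : ∫ x in a..b, 2 * (1 - x) = (1 - a) ^ 2 - (1 - b) ^ 2 := by
    ring_nf
    simp (disch := apply Continuous.intervalIntegrable; fun_prop) only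
      [intervalIntegral.integral_sub, intervalIntegral.integral_mul_const, integral_id,
        intervalIntegral.integral_const, smul_eq_mul]
    ring
  rw [← hint, intervalIntegral.integral_of_le hab, ← integral_Icc_eq_integral_Ioc,
    ofReal_integral_eq_lintegral_ofReal
      (by fun_prop : Continuous fun x : ℝ => 2 * (1 - x)).integrableOn_Icc
      ((ae_restrict_iff' measurableSet_Icc).mpr
        (ae_of_all _ fun x hx => show (0 : ℝ) ≤ 2 * (1 - x) by linarith [hx.2]))]

lemma betaOneTwo_apply {S : Set ℝ} (hS : MeasurableSet S) :
    betaOneTwo S = ∫⁻ x in S ∩ Icc 0 1, ENNReal.ofReal (2 * (1 - x)) := by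
  rw [betaOneTwo, withDensity_apply _ hS, uniformIcc, Measure.restrict_restrict hS]

instance : IsProbabilityMeasure betaOneTwo :=
  ⟨by rw [betaOneTwo_apply MeasurableSet.univ, univ_inter,
    lintegral_Icc_betaOneTwo_density zero_le_one le_rfl]; norm_num⟩

lemma betaOneTwo_Ioc {a b : ℝ} (ha : 0 ≤ a) (hab : a ≤ b) (hb : b ≤ 1) :
    betaOneTwo (Ioc a b) = ENNReal.ofReal ((1 - a) ^ 2 - (1 - b) ^ 2) := by
  rw [betaOneTwo_apply measurableSet_Ioc,
    inter_eq_left.mpr (Ioc_subset_Icc_self.trans (Icc_subset_Icc ha hb)),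
    Measure.restrict_congr_set Ioc_ae_eq_Icc, lintegral_Icc_betaOneTwo_density hab hb]

lemma betaOneTwo_Ioi {a : ℝ} (ha : a ∈ Icc (0 : ℝ) 1) :
    betaOneTwo (Ioi a) = ENNReal.ofReal ((1 - a) ^ 2) := by
  rw [betaOneTwo_apply measurableSet_Ioi, show Ioi a ∩ Icc 0 1 = Ioc a 1 by ext x; simp; grind,
    Measure.restrict_congr_set Ioc_ae_eq_Icc, lintegral_Icc_betaOneTwo_density ha.2 le_rfl]
  norm_num

lemma betaOneTwo_Iic {a : ℝ} (ha : a ∈ Icc (0 : ℝ) 1) :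
    betaOneTwo (Iic a) = ENNReal.ofReal (1 - (1 - a) ^ 2) := by
  rw [betaOneTwo_apply measurableSet_Iic, show Iic a ∩ Icc 0 1 = Icc 0 a by ext x; simp; grind,
    lintegral_Icc_betaOneTwo_density ha.1 ha.2]
  norm_num

lemma one_sub_one_sub_sq_nonneg {s : ℝ} (hs : s ∈ Icc (0 : ℝ) 1) : 0 ≤ 1 - (1 - s) ^ 2 := by
  nlinarith [hs.1, hs.2]

/-- The law of `((T 0, T 1), (T 2, T 3))`. -/
def jointLaw : Measure ((ℝ × ℝ) × (ℝ × ℝ)) :=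
  (uniformIcc.prod uniformIcc).prod (betaOneTwo.prod betaOneTwo)

def firstBelowControls : Set ((ℝ × ℝ) × (ℝ × ℝ)) := {q | q.1.1 < q.2.1 ∧ q.1.1 < q.2.2}

def firstBetweenControls : Set ((ℝ × ℝ) × (ℝ × ℝ)) :=
  {q | (q.2.1 ≤ q.1.1 ∧ q.1.1 < q.2.2) ∨ (q.1.1 < q.2.1 ∧ q.2.2 ≤ q.1.1)}

def secondAboveControls : Set ((ℝ × ℝ) × (ℝ × ℝ)) := {q | q.2.1 ≤ q.1.2 ∧ q.2.2 ≤ q.1.2}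

lemma measurableSet_firstBelowControls : MeasurableSet firstBelowControls :=
  (measurableSet_lt measurable_fst.fst measurable_snd.fst).inter
    (measurableSet_lt measurable_fst.fst measurable_snd.snd)

lemma measurableSet_firstBetweenControls : MeasurableSet firstBetweenControls :=
  ((measurableSet_le measurable_snd.fst measurable_fst.fst).inter
    (measurableSet_lt measurable_fst.fst measurable_snd.snd)).union
  ((measurableSet_lt measurable_fst.fst measurable_snd.fst).inter
    (measurableSet_le measurable_snd.snd measurable_fst.fst))

lemma measurableSet_secondAboveControls : MeasurableSet secondAboveControls :=
  (measurableSet_le measurable_snd.fst measurable_fst.snd).inter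
    (measurableSet_le measurable_snd.snd measurable_fst.snd)

lemma jointLaw_firstBelowControls : jointLaw firstBelowControls = ENNReal.ofReal (1 / 5) := by
  have hsection : ∀ s t : ℝ, Prod.mk (s, t) ⁻¹' firstBelowControls = Ioi s ×ˢ Ioi s := by
    intro s t; ext; simp [firstBelowControls]
  rw [jointLaw, prod_prod_apply_eq_lintegral_lintegral measurableSet_firstBelowControls]
  simp_rw [hsection, Measure.prod_prod, lintegral_const, measure_univ, mul_one]
  rw [lintegral_uniformIcc_eq_ofReal_intervalIntegral (g := fun s => (1 - s) ^ 4)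
    (by fun_prop) (fun s _ => by positivity)
    (fun s hs => by rw [betaOneTwo_Ioi hs, ← ENNReal.ofReal_mul (by positivity)]; ring_nf)]
  congr 1
  ring_nf
  simp (disch := apply Continuous.intervalIntegrable; fun_prop) only
    [intervalIntegral.integral_add, intervalIntegral.integral_sub,
      intervalIntegral.integral_mul_const, integral_pow, integral_id,
      intervalIntegral.integral_const, smul_eq_mul]
  norm_num

lemma jointLaw_firstBetweenControls :
    jointLaw firstBetweenControls = ENNReal.ofReal (4 / 15) := by
  have hsection : ∀ s t : ℝ,
      Prod.mk (s, t) ⁻¹' firstBetweenControls = Iic s ×ˢ Ioi s ∪ Ioi s ×ˢ Iic s := by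
    intro s t; ext; simp [firstBetweenControls]
  rw [jointLaw, prod_prod_apply_eq_lintegral_lintegral measurableSet_firstBetweenControls]
  simp_rw [hsection, prod_self_union_swap (Iic_disjoint_Ioi le_rfl) measurableSet_Iic
    measurableSet_Ioi, lintegral_const, measure_univ, mul_one]
  rw [lintegral_uniformIcc_eq_ofReal_intervalIntegral
    (g := fun s => 2 * ((1 - (1 - s) ^ 2) * (1 - s) ^ 2)) (by fun_prop)
    (fun s hs => by have := one_sub_one_sub_sq_nonneg hs; positivity)
    (fun s hs => by
      rw [betaOneTwo_Iic hs, betaOneTwo_Ioi hs,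
        ← ENNReal.ofReal_mul (one_sub_one_sub_sq_nonneg hs), ← ENNReal.ofReal_ofNat 2,
        ← ENNReal.ofReal_mul zero_le_two])]
  congr 1
  ring_nf
  simp (disch := apply Continuous.intervalIntegrable; fun_prop) only
    [intervalIntegral.integral_add, intervalIntegral.integral_sub,
      intervalIntegral.integral_mul_const, integral_pow, integral_id]
  norm_num

lemma lintegral_betaOneTwo_Ioc_mul_self {s : ℝ} (hs : s ∈ Icc (0 : ℝ) 1) :
    ∫⁻ t, betaOneTwo (Ioc s t) * betaOneTwo (Ioc s t) ∂uniformIcc =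
      ENNReal.ofReal (8 / 15 * (1 - s) ^ 5) := by
  rw [lintegral_uniformIcc_eq_ofReal_intervalIntegral_of_eq_zero
    (g := fun t => ((1 - s) ^ 2 - (1 - t) ^ 2) ^ 2) hs (by fun_prop) (fun t _ => by positivity)
    (fun t ht => by rw [Ioc_eq_empty ht.2.not_gt, measure_empty, zero_mul])
    (fun t ht => by
      rw [betaOneTwo_Ioc hs.1 ht.1 ht.2, ← sq,
        ← ENNReal.ofReal_pow (by nlinarith [ht.1, ht.2, hs.1])])]
  congr 1
  ring_nf
  -- `simp` does not unify `r * ?f x` with `r * x`, hence the instance `f := fun x => x`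
  simp (disch := apply Continuous.intervalIntegrable; fun_prop) only
    [intervalIntegral.integral_add, intervalIntegral.integral_sub, intervalIntegral.integral_neg,
      intervalIntegral.integral_const_mul, intervalIntegral.integral_const_mul (f := fun x => x),
      intervalIntegral.integral_mul_const, integral_pow, integral_id,
      intervalIntegral.integral_const, smul_eq_mul]
  ring

lemma jointLaw_firstBelowControls_inter_secondAboveControls :
    jointLaw (firstBelowControls ∩ secondAboveControls) = ENNReal.ofReal (4 / 45) := by
  have hsection : ∀ s t : ℝ,
      Prod.mk (s, t) ⁻¹' (firstBelowControls ∩ secondAboveControls) = Ioc s t ×ˢ Ioc s t := by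
    intro s t; ext; simp [firstBelowControls, secondAboveControls]; tauto
  rw [jointLaw, prod_prod_apply_eq_lintegral_lintegral
    (measurableSet_firstBelowControls.inter measurableSet_secondAboveControls)]
  simp_rw [hsection, Measure.prod_prod]
  rw [lintegral_uniformIcc_eq_ofReal_intervalIntegral (g := fun s => 8 / 15 * (1 - s) ^ 5)
    (by fun_prop) (fun s hs => by have := hs.2; positivity)
    (fun s hs => lintegral_betaOneTwo_Ioc_mul_self hs)]
  congr 1
  ring_nf
  simp (disch := apply Continuous.intervalIntegrable; fun_prop) only
    [intervalIntegral.integral_add, intervalIntegral.integral_mul_const, integral_pow, integral_id,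
      intervalIntegral.integral_const, smul_eq_mul]
  norm_num

lemma lintegral_two_mul_betaOneTwo_Iic_mul_Ioc {s : ℝ} (hs : s ∈ Icc (0 : ℝ) 1) :
    ∫⁻ t, 2 * (betaOneTwo (Iic (min s t)) * betaOneTwo (Ioc s t)) ∂uniformIcc =
      ENNReal.ofReal (4 / 3 * ((1 - (1 - s) ^ 2) * (1 - s) ^ 3)) := by
  rw [lintegral_uniformIcc_eq_ofReal_intervalIntegral_of_eq_zero
    (g := fun t => 2 * ((1 - (1 - s) ^ 2) * ((1 - s) ^ 2 - (1 - t) ^ 2))) hs (by fun_prop)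
    (fun t ht => by
      have := one_sub_one_sub_sq_nonneg hs
      have : 0 ≤ (1 - s) ^ 2 - (1 - t) ^ 2 := by nlinarith [ht.1, ht.2, hs.1]
      positivity)
    (fun t ht => by rw [Ioc_eq_empty ht.2.not_gt, measure_empty, mul_zero, mul_zero])
    (fun t ht => by
      rw [min_eq_left ht.1, betaOneTwo_Iic hs, betaOneTwo_Ioc hs.1 ht.1 ht.2,
        ← ENNReal.ofReal_mul (one_sub_one_sub_sq_nonneg hs),
        ← ENNReal.ofReal_ofNat 2, ← ENNReal.ofReal_mul zero_le_two])]
  congr 1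
  ring_nf
  simp (disch := apply Continuous.intervalIntegrable; fun_prop) only
    [intervalIntegral.integral_add, intervalIntegral.integral_sub,
      intervalIntegral.integral_const_mul, intervalIntegral.integral_const_mul (f := fun x => x),
      intervalIntegral.integral_mul_const, integral_pow, integral_id,
      intervalIntegral.integral_const, smul_eq_mul]
  ring

lemma jointLaw_firstBetweenControls_inter_secondAboveControls :
    jointLaw (firstBetweenControls ∩ secondAboveControls) = ENNReal.ofReal (1 / 9) := by
  have hsection : ∀ s t : ℝ,
      Prod.mk (s, t) ⁻¹' (firstBetweenControls ∩ secondAboveControls) =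
        Iic (min s t) ×ˢ Ioc s t ∪ Ioc s t ×ˢ Iic (min s t) := by
    intro s t; ext; simp [firstBetweenControls, secondAboveControls]; tauto
  have hdisj : ∀ s t : ℝ, Disjoint (Iic (min s t)) (Ioc s t) := fun s t =>
    disjoint_left.mpr fun x h₁ h₂ => (h₂.1.trans_le (h₁.trans (min_le_left s t))).false
  rw [jointLaw, prod_prod_apply_eq_lintegral_lintegral
    (measurableSet_firstBetweenControls.inter measurableSet_secondAboveControls)]
  simp_rw [hsection, prod_self_union_swap (hdisj _ _) measurableSet_Iic measurableSet_Ioc]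
  rw [lintegral_uniformIcc_eq_ofReal_intervalIntegral
    (g := fun s => 4 / 3 * ((1 - (1 - s) ^ 2) * (1 - s) ^ 3)) (by fun_prop)
    (fun s hs => by have := one_sub_one_sub_sq_nonneg hs; have := hs.2; positivity)
    (fun s hs => lintegral_two_mul_betaOneTwo_Iic_mul_Ioc hs)]
  congr 1
  ring_nf
  simp (disch := apply Continuous.intervalIntegrable; fun_prop) only
    [intervalIntegral.integral_add, intervalIntegral.integral_mul_const, integral_pow, integral_id]
  norm_num

lemma ofReal_inv_mul_ofReal {a b : ℝ} (ha : 0 < a) :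
    (ENNReal.ofReal a)⁻¹ * ENNReal.ofReal b = ENNReal.ofReal (b / a) := by
  rw [← ENNReal.div_eq_inv_mul, ENNReal.ofReal_div_of_pos ha]

lemma jointLaw_cond_firstBelowControls :
    jointLaw[|firstBelowControls] secondAboveControls = 4 / 9 := by
  rw [cond_apply measurableSet_firstBelowControls, jointLaw_firstBelowControls,
    jointLaw_firstBelowControls_inter_secondAboveControls, ofReal_inv_mul_ofReal (by norm_num),
    ← ENNReal.ofReal_ofNat 4, ← ENNReal.ofReal_ofNat 9, ← ENNReal.ofReal_div_of_pos (by norm_num)]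
  norm_num

lemma jointLaw_cond_firstBetweenControls :
    jointLaw[|firstBetweenControls] secondAboveControls = 5 / 12 := by
  rw [cond_apply measurableSet_firstBetweenControls, jointLaw_firstBetweenControls,
    jointLaw_firstBetweenControls_inter_secondAboveControls, ofReal_inv_mul_ofReal (by norm_num),
    ← ENNReal.ofReal_ofNat 5, ← ENNReal.ofReal_ofNat 12, ← ENNReal.ofReal_div_of_pos (by norm_num)]
  norm_num

end

/-- with `T 0, T 1` i.i.d. uniform on `[0,1]`, `T 2, T 3` i.i.d. Beta(1,2)
(density `2(1-x)` on `[0,1]`), all four independent, the RANC p-values satisfy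
`P(p_2 = 1 | p_1 = 1/3) = 4/9 > 5/12 = P(p_2 = 1 | p_1 = 2/3)`; so `(p_1, p_2)` is not
positively regression dependent although the nulls stochastically dominate the controls. -/
theorem stmt19 {Ω : Type*} [MeasurableSpace Ω] (μ : Measure Ω) [IsProbabilityMeasure μ]
    (T : Fin 4 → Ω → ℝ) (hmeas : ∀ k, Measurable (T k))
    (hindep : iIndepFun T μ)
    (hunif : ∀ k : Fin 4, (k : ℕ) < 2 →
      Measure.map (T k) μ = volume.restrict (Set.Icc (0 : ℝ) 1))
    (hbeta : ∀ k : Fin 4, 2 ≤ (k : ℕ) →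
      Measure.map (T k) μ =
        (volume.restrict (Set.Icc (0 : ℝ) 1)).withDensity
          (fun x => ENNReal.ofReal (2 * (1 - x)))) :
    μ[|{ω | ranc4 T 0 ω = 1 / 3}] {ω | ranc4 T 1 ω = 1} = 4 / 9 ∧
      μ[|{ω | ranc4 T 0 ω = 2 / 3}] {ω | ranc4 T 1 ω = 1} = 5 / 12 ∧
      μ[|{ω | ranc4 T 0 ω = 2 / 3}] {ω | ranc4 T 1 ω = 1} <
        μ[|{ω | ranc4 T 0 ω = 1 / 3}] {ω | ranc4 T 1 ω = 1} := by
  set J : Ω → (ℝ × ℝ) × (ℝ × ℝ) := fun ω => ((T 0 ω, T 1 ω), (T 2 ω, T 3 ω))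
  have hJ : Measurable J := ((hmeas 0).prodMk (hmeas 1)).prodMk ((hmeas 2).prodMk (hmeas 3))
  have hlaw : μ.map J = jointLaw := by
    rw [map_prodMk_prodMk_eq_prod hmeas hindep, hunif 0 (by decide), hunif 1 (by decide),
      hbeta 2 (by decide), hbeta 3 (by decide)]
    rfl
  have hp₁_low : {ω | ranc4 T 0 ω = 1 / 3} = J ⁻¹' firstBelowControls := by
    ext ω; simp only [mem_ofPred_eq, mem_preimage, ranc4_eq_one_third_iff]; rfl
  have hp₁_mid : {ω | ranc4 T 0 ω = 2 / 3} = J ⁻¹' firstBetweenControls := by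
    ext ω; simp only [mem_ofPred_eq, mem_preimage, ranc4_eq_two_thirds_iff]; rfl
  have hp₂_top : {ω | ranc4 T 1 ω = 1} = J ⁻¹' secondAboveControls := by
    ext ω; simp only [mem_ofPred_eq, mem_preimage, ranc4_eq_one_iff]; rfl
  have hlow : μ[|{ω | ranc4 T 0 ω = 1 / 3}] {ω | ranc4 T 1 ω = 1} = 4 / 9 := by
    rw [hp₁_low, hp₂_top, cond_preimage_eq_map_cond hJ measurableSet_firstBelowControls
      measurableSet_secondAboveControls, hlaw, jointLaw_cond_firstBelowControls]
  have hmid : μ[|{ω | ranc4 T 0 ω = 2 / 3}] {ω | ranc4 T 1 ω = 1} = 5 / 12 := by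
    rw [hp₁_mid, hp₂_top, cond_preimage_eq_map_cond hJ measurableSet_firstBetweenControls
      measurableSet_secondAboveControls, hlaw, jointLaw_cond_firstBetweenControls]
  refine ⟨hlow, hmid, ?_⟩
  rw [hlow, hmid]
  exact (ENNReal.toReal_lt_toReal (ENNReal.div_ne_top (by simp) (by simp))
    (ENNReal.div_ne_top (by simp) (by simp))).mp (by norm_num [ENNReal.toReal_div])
end
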